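/- arXiv:2402.04590 — 7 statements merged into one kernel-verified Lean document; each statement's English description precedes it below -/
import Mathlib

section
/- The map red : expn(E) → E together with Inst : (e, ε) ↦ ε(e) is an A-strategy on the A-game E: red is a total map of event structures preserving polarity, sort(Inst(e,ε)) = sort(var(red(e,ε))), red is receptive, and red is innocent. -/
/-- The order and consistency data of an event structure. -/
structure PreES (E : Type) where
  le : E → E → Prop
  con : Set E → Prop

namespace PreES

variable {E F : Type}

/-- A configuration: every finite subset is consistent, and it is down-closed. -/
def Config (P : PreES E) (x : Set E) : Prop :=
  (∀ X : Set E, X ⊆ x → X.Finite → P.con X) ∧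
  (∀ e e' : E, P.le e' e → e ∈ x → e' ∈ x)

/-- `e` is enabled at the configuration `x`: `x ∪ {e}` is again a configuration. -/
def Enabled (P : PreES E) (x : Set E) (e : E) : Prop :=
  e ∉ x ∧ P.Config (insert e x)

/-- Immediate causal dependency `e → e'` : `e ≠ e'`, `e ≤ e'` and nothing strictly between. -/
def Imm (P : PreES E) (e e' : E) : Prop :=
  e ≠ e' ∧ P.le e e' ∧ ∀ d, P.le e d → P.le d e' → d = e ∨ d = e'

/-- A total map of event structures: configurations map to configurations,
injectively on each configuration. -/
def IsMap (P : PreES E) (Q : PreES F) (f : E → F) : Prop :=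
  (∀ x : Set E, P.Config x → Q.Config (f '' x)) ∧
  (∀ x : Set E, P.Config x → ∀ e₁ ∈ x, ∀ e₂ ∈ x, f e₁ = f e₂ → e₁ = e₂)

end PreES

/-- An event structure. -/
structure ES (E : Type) extends PreES E where
  le_refl : ∀ e, le e e
  le_trans : ∀ a b c, le a b → le b c → le a c
  le_antisymm : ∀ a b, le a b → le b a → a = b
  causes_finite : ∀ e, {e' | le e' e}.Finite
  con_singleton : ∀ e, con {e}
  con_subset : ∀ X Y : Set E, Y ⊆ X → con X → con Y
  con_extend : ∀ (X : Set E) (e e' : E), con X → le e e' → e' ∈ X → con (insert e X)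

/-- No-overlap: events carrying the same variable are never concurrent. -/
def NoOverlap {E V : Type} (P : PreES E) (var : E → V) : Prop :=
  ∀ e e', var e = var e' →
    ¬(P.con {e, e'} ∧ ¬ P.le e e' ∧ ¬ P.le e' e)

/-- Race-freeness: enabled events of opposite polarities can occur jointly.
`true` is the polarity `+`, `false` is `−`. -/
def RaceFree {E : Type} (P : PreES E) (pol : E → Bool) : Prop :=
  ∀ x : Set E, P.Config x → ∀ e e', P.Enabled x e → P.Enabled x e' →
    pol e = true → pol e' = false → e ≠ e' → P.Config (insert e (insert e' x))

/-- An (ordinary) strategy: a total, polarity preserving map of event structures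
which is receptive and innocent. -/
def IsStrategy {SE E : Type} (S : PreES SE) (G : PreES E)
    (polS : SE → Bool) (polG : E → Bool) (σ : SE → E) : Prop :=
  PreES.IsMap S G σ ∧
  (∀ s, polG (σ s) = polS s) ∧
  (∀ x : Set SE, S.Config x → ∀ e, polG e = false → G.Enabled (σ '' x) e →
    ∃! s, S.Enabled x s ∧ σ s = e) ∧
  (∀ s s', S.Imm s s' → (polS s' = false ∨ polS s = true) → G.Imm (σ s) (σ s'))

/-- An `𝓐`-strategy on an `𝓐`-game: a total, polarity preserving map with an
instantiation function of matching sorts, receptive (for every element of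
matching sort) and innocent. -/
def IsAStrategy {SE E A V Srt : Type} (S : PreES SE) (G : PreES E)
    (polS : SE → Bool) (polG : E → Bool) (var : E → V)
    (sortA : A → Srt) (sortV : V → Srt)
    (σ : SE → E) (inst : SE → A) : Prop :=
  PreES.IsMap S G σ ∧
  (∀ s, polG (σ s) = polS s) ∧
  (∀ s, sortA (inst s) = sortV (var (σ s))) ∧
  (∀ x : Set SE, S.Config x → ∀ e, polG e = false → G.Enabled (σ '' x) e →
    ∀ a, sortA a = sortV (var e) →
      ∃! s, S.Enabled x s ∧ σ s = e ∧ inst s = a) ∧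
  (∀ s s', S.Imm s s' → (polS s' = false ∨ polS s = true) → G.Imm (σ s) (σ s'))

/-- An event of the `𝓐`-expansion: an event `e` together with a sort-respecting
instantiation of its down-closure `[e]` (encoded as an `Option`-valued function
whose domain is exactly `[e]`). -/
structure ExEvent {E A V Srt : Type} (P : PreES E) (var : E → V)
    (sortA : A → Srt) (sortV : V → Srt) where
  ev : E
  inst : E → Option A
  dom : ∀ e', (inst e').isSome ↔ P.le e' ev
  srt : ∀ e' a, inst e' = some a → sortA a = sortV (var e')

/-- The `𝓐`-expansion of a game, as order and consistency data. -/
def expn {E A V Srt : Type} (P : PreES E) (var : E → V)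
    (sortA : A → Srt) (sortV : V → Srt) : PreES (ExEvent P var sortA sortV) where
  le p q := P.le p.ev q.ev ∧ ∀ e', P.le e' p.ev → q.inst e' = p.inst e'
  con X := P.con (ExEvent.ev '' X) ∧ ∀ p ∈ X, ∀ q ∈ X, p.ev = q.ev → p = q

/-- The projection `red : expn(E) → E`. -/
def red {E A V Srt : Type} {P : PreES E} {var : E → V}
    {sortA : A → Srt} {sortV : V → Srt} (p : ExEvent P var sortA sortV) : E := p.ev

/-- The instantiation `Inst(e,ε) = ε(e)` (needs reflexivity of the order). -/
def ExEvent.Inst {E A V Srt : Type} {P : PreES E} {var : E → V}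
    {sortA : A → Srt} {sortV : V → Srt} (href : ∀ e, P.le e e)
    (p : ExEvent P var sortA sortV) : A :=
  (p.inst p.ev).get ((p.dom p.ev).mpr (href p.ev))

/-- Parallel composition of the order/consistency data of two event structures. -/
def parPre {E F : Type} (P : PreES E) (Q : PreES F) : PreES (E ⊕ F) where
  le x y :=
    match x, y with
    | .inl a, .inl b => P.le a b
    | .inr a, .inr b => Q.le a b
    | _, _ => False
  con X := P.con {a | Sum.inl a ∈ X} ∧ Q.con {b | Sum.inr b ∈ X}

/-- Restriction of the data of an event structure to a subset of events. -/
def subPre {E : Type} (P : PreES E) (p : E → Prop) : PreES {e : E // p e} where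
  le a b := P.le a.1 b.1
  con X := P.con (Subtype.val '' X)

/-!
Events of a configuration of `expn(E)` lying over the same event of `E` coincide, since
consistency of the expansion forbids two distinct instantiations of one event; so `red` is
injective on configurations. Restricting an instantiation `ε` of `[e]` to a cause `d ≤ e` gives
an event of `expn(E)` below `(e, ε)`: this yields down-closure of `red x` and innocence. For
receptivity, the instantiations of the events of `x` agree on common causes (their restrictions
lie in `x` over the same event), so they glue to an instantiation of `[e] \ {e}`, and setting
`ε(e) = a` gives the unique event over `e` with `Inst = a` that extends `x`.
-/

theorem PreES.mem_of_enabled_of_le {E : Type} {P : PreES E} {y : Set E} {e e' : E}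
    (he : P.Enabled y e) (hle : P.le e' e) (hne : e' ≠ e) : e' ∈ y :=
  (he.2.2 e e' hle (Set.mem_insert e y)).resolve_left hne

section Expansion

variable {E A V Srt : Type} {var : E → V} {sortA : A → Srt} {sortV : V → Srt}

namespace ExEvent

section

variable {P : PreES E}

theorem ext_of_le {p q : ExEvent P var sortA sortV} (hev : p.ev = q.ev)
    (hinst : ∀ e, P.le e p.ev → p.inst e = q.inst e) : p = q := by
  have hε : p.inst = q.inst := by
    funext d
    by_cases hd : P.le d p.ev
    · exact hinst d hd
    · rw [Option.not_isSome_iff_eq_none.mp (mt (p.dom d).mp hd),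
        Option.not_isSome_iff_eq_none.mp (mt (q.dom d).mp (hev ▸ hd))]
  cases p
  cases q
  cases hev
  cases hε
  rfl

theorem eq_of_le_of_ev_eq {p q : ExEvent P var sortA sortV}
    (hle : (expn P var sortA sortV).le p q) (hev : p.ev = q.ev) : p = q :=
  ext_of_le hev fun e he => (hle.2 e he).symm

theorem inst_ev (href : ∀ e, P.le e e) (p : ExEvent P var sortA sortV) :
    p.inst p.ev = some (p.Inst href) :=
  (Option.some_get _).symm

theorem Inst_eq_iff (href : ∀ e, P.le e e) {p : ExEvent P var sortA sortV} {a : A} :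
    p.Inst href = a ↔ p.inst p.ev = some a := by
  rw [inst_ev href, Option.some_inj]

theorem sortA_Inst (href : ∀ e, P.le e e) (p : ExEvent P var sortA sortV) :
    sortA (p.Inst href) = sortV (var p.ev) :=
  p.srt _ _ (inst_ev href p)

end

variable {S : ES E}

open Classical in
noncomputable def restrict (q : ExEvent S.toPreES var sortA sortV) (e : E) (h : S.le e q.ev) :
    ExEvent S.toPreES var sortA sortV where
  ev := e
  inst d := if S.le d e then q.inst d else none
  dom d := by
    by_cases hd : S.le d e
    · simpa [hd] using (q.dom d).mpr (S.le_trans _ _ _ hd h)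
    · simp [hd]
  srt d a ha := by
    by_cases hd : S.le d e
    · exact q.srt d a (by simpa [hd] using ha)
    · simp [hd] at ha

theorem restrict_inst_of_le (q : ExEvent S.toPreES var sortA sortV) {e d : E}
    (h : S.le e q.ev) (hd : S.le d e) : (q.restrict e h).inst d = q.inst d :=
  if_pos hd

theorem restrict_le (q : ExEvent S.toPreES var sortA sortV) {e : E} (h : S.le e q.ev) :
    (expn S.toPreES var sortA sortV).le (q.restrict e h) q :=
  ⟨h, fun _ hd => (q.restrict_inst_of_le h hd).symm⟩

end ExEvent

theorem expn_config_injOn {P : PreES E} {x : Set (ExEvent P var sortA sortV)}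
    (hx : (expn P var sortA sortV).Config x) : Set.InjOn ExEvent.ev x := by
  intro q₁ h₁ q₂ h₂ hev
  have hpair := hx.1 {q₁, q₂} (Set.insert_subset h₁ (Set.singleton_subset_iff.mpr h₂))
    (Set.toFinite _)
  exact hpair.2 q₁ (Set.mem_insert _ _) q₂ (Set.mem_insert_of_mem _ rfl) hev

theorem expn_config_inst_eq {S : ES E} {x : Set (ExEvent S.toPreES var sortA sortV)}
    (hx : (expn S.toPreES var sortA sortV).Config x) {q₁ q₂ : ExEvent S.toPreES var sortA sortV}
    (h₁ : q₁ ∈ x) (h₂ : q₂ ∈ x) {e : E} (hle₁ : S.le e q₁.ev) (hle₂ : S.le e q₂.ev) :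
    q₁.inst e = q₂.inst e := by
  have hrestrict : q₁.restrict e hle₁ = q₂.restrict e hle₂ :=
    expn_config_injOn hx (hx.2 _ _ (q₁.restrict_le hle₁) h₁) (hx.2 _ _ (q₂.restrict_le hle₂) h₂)
      rfl
  rw [← q₁.restrict_inst_of_le hle₁ (S.le_refl e), hrestrict, q₂.restrict_inst_of_le]
  exact S.le_refl e

theorem expn_config_image {S : ES E} {x : Set (ExEvent S.toPreES var sortA sortV)}
    (hx : (expn S.toPreES var sortA sortV).Config x) : S.Config (ExEvent.ev '' x) := by
  refine ⟨fun Y hY hYfin => ?_, ?_⟩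
  · obtain ⟨X, hXx, rfl⟩ := Set.subset_image_iff.mp hY
    exact (hx.1 X hXx (hYfin.of_finite_image ((expn_config_injOn hx).mono hXx))).1
  · rintro _ d hd ⟨q, hq, rfl⟩
    exact ⟨q.restrict d hd, hx.2 _ _ (q.restrict_le hd) hq, rfl⟩

theorem isMap_red {S : ES E} :
    PreES.IsMap (expn S.toPreES var sortA sortV) S.toPreES red :=
  ⟨fun _ hx => expn_config_image hx, fun _ hx => expn_config_injOn hx⟩

/-- An event strictly between `red s` and `red s'` lifts, by restricting `s'`, to one between
`s` and `s'`. -/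
theorem PreES.Imm.red_imm {S : ES E} {s s' : ExEvent S.toPreES var sortA sortV}
    (h : (expn S.toPreES var sortA sortV).Imm s s') : S.Imm (red s) (red s') := by
  obtain ⟨hne, hle, hbetween⟩ := h
  refine ⟨fun hev => hne (ExEvent.eq_of_le_of_ev_eq hle hev), hle.1, fun d hsd hds' => ?_⟩
  have hmid : (expn S.toPreES var sortA sortV).le s (s'.restrict d hds') :=
    ⟨hsd, fun d' hd' => (s'.restrict_inst_of_le hds' (S.le_trans _ _ _ hd' hsd)).trans
      (hle.2 d' hd')⟩
  rcases hbetween _ hmid (s'.restrict_le hds') with h | h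
  · exact .inl (congrArg ExEvent.ev h)
  · exact .inr (congrArg ExEvent.ev h)

namespace ExEvent

variable {S : ES E} {x : Set (ExEvent S.toPreES var sortA sortV)} {e : E} {a : A}

open Classical in
noncomputable def extend (he : S.Enabled (ev '' x) e) (a : A)
    (hsa : sortA a = sortV (var e)) : ExEvent S.toPreES var sortA sortV where
  ev := e
  inst d := if hd : S.le d e then
      if hde : d = e then some a else (S.mem_of_enabled_of_le he hd hde).choose.inst d
    else none
  dom d := by
    by_cases hd : S.le d e
    · by_cases hde : d = e
      · simp [hde]
      · have hdq : S.le d (S.mem_of_enabled_of_le he hd hde).choose.ev := by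
          rw [(S.mem_of_enabled_of_le he hd hde).choose_spec.2]
          exact S.le_refl d
        simpa [hd, hde] using ((S.mem_of_enabled_of_le he hd hde).choose.dom d).mpr hdq
    · simp [hd]
  srt d a' ha' := by
    by_cases hd : S.le d e
    · by_cases hde : d = e
      · subst hde
        simp only [hd, dif_pos, Option.some_inj] at ha'
        exact ha' ▸ hsa
      · exact (S.mem_of_enabled_of_le he hd hde).choose.srt d a' (by simpa [hd, hde] using ha')
    · simp [hd] at ha'

section Extend

variable (he : S.Enabled (ev '' x) e) (hsa : sortA a = sortV (var e))

theorem extend_inst_self : (extend he a hsa).inst e = some a := by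
  simp [extend, S.le_refl e]

theorem extend_inst_of_mem (hx : (expn S.toPreES var sortA sortV).Config x)
    {q : ExEvent S.toPreES var sortA sortV} (hq : q ∈ x) {d : E} (hd : S.le d e) (hde : d ≠ e)
    (hdq : S.le d q.ev) : (extend he a hsa).inst d = q.inst d := by
  obtain ⟨hq', hq'd⟩ := (S.mem_of_enabled_of_le he hd hde).choose_spec
  have hdq' : S.le d (S.mem_of_enabled_of_le he hd hde).choose.ev := by
    rw [hq'd]
    exact S.le_refl d
  simpa [extend, hd, hde] using expn_config_inst_eq hx hq' hq hdq' hdq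

theorem extend_enabled (hx : (expn S.toPreES var sortA sortV).Config x) :
    (expn S.toPreES var sortA sortV).Enabled x (extend he a hsa) := by
  have hnotin : extend he a hsa ∉ x := fun hp => he.1 ⟨_, hp, rfl⟩
  have hinj : Set.InjOn ev (insert (extend he a hsa) x) :=
    (Set.injOn_insert hnotin).mpr ⟨expn_config_injOn hx, he.1⟩
  refine ⟨hnotin, fun X hX hXfin => ⟨?_, fun p hp q hq => hinj (hX hp) (hX hq)⟩, ?_⟩
  · refine he.2.1 _ ?_ (hXfin.image ev)
    calc ev '' X ⊆ ev '' insert (extend he a hsa) x := Set.image_mono hX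
      _ = insert e (ev '' x) := Set.image_insert_eq
  · intro r r' hle hr
    rcases hr with rfl | hr
    · by_cases hev : r'.ev = e
      · exact .inl (eq_of_le_of_ev_eq hle hev)
      · obtain ⟨q, hq, hqev⟩ := S.mem_of_enabled_of_le he hle.1 hev
        refine .inr (ext_of_le hqev.symm (fun d hd => ?_) ▸ hq)
        have hde : d ≠ e := by
          rintro rfl
          exact hev (S.le_antisymm _ _ hle.1 hd)
        rw [← hle.2 d hd]
        exact extend_inst_of_mem he hsa hx hq (S.le_trans _ _ _ hd hle.1) hde (hqev ▸ hd)
    · exact .inr (hx.2 _ _ hle hr)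

theorem eq_extend (hx : (expn S.toPreES var sortA sortV).Config x)
    {p : ExEvent S.toPreES var sortA sortV} (hp : (expn S.toPreES var sortA sortV).Enabled x p)
    (hev : p.ev = e) (hInst : p.Inst S.le_refl = a) : p = extend he a hsa := by
  refine ext_of_le hev fun d hd => ?_
  by_cases hde : d = e
  · rw [hde, extend_inst_self, ← hev]
    exact (Inst_eq_iff S.le_refl).mp hInst
  · obtain ⟨q, hq, rfl⟩ := S.mem_of_enabled_of_le he (hev ▸ hd) hde
    rw [expn_config_inst_eq hp.2 (Set.mem_insert _ _) (Set.mem_insert_of_mem _ hq) hd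
      (S.le_refl _), extend_inst_of_mem he hsa hx hq (hev ▸ hd) hde (S.le_refl _)]

end Extend

theorem existsUnique_enabled (he : S.Enabled (ev '' x) e) (hsa : sortA a = sortV (var e))
    (hx : (expn S.toPreES var sortA sortV).Config x) :
    ∃! p, (expn S.toPreES var sortA sortV).Enabled x p ∧ p.ev = e ∧ p.Inst S.le_refl = a :=
  ⟨extend he a hsa,
    ⟨extend_enabled he hsa hx, rfl, (Inst_eq_iff S.le_refl).mpr (extend_inst_self he hsa)⟩,
    fun _ ⟨hp, hev, hInst⟩ => eq_extend he hsa hx hp hev hInst⟩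

end ExEvent

end Expansion

theorem red_Inst_isAStrategy_general {E A V Srt : Type} (S : ES E) (pol : E → Bool)
    (var : E → V) (sortA : A → Srt) (sortV : V → Srt) :
    IsAStrategy (expn S.toPreES var sortA sortV) S.toPreES
      (fun p => pol p.ev) pol var sortA sortV
      (fun p => red p) (fun p => p.Inst S.le_refl) :=
  ⟨isMap_red, fun _ => rfl, fun p => p.sortA_Inst S.le_refl,
    fun _ hx _ _ he _ hsa => ExEvent.existsUnique_enabled he hsa hx,
    fun _ _ h _ => h.red_imm⟩

/-- `red : expn(E) → E` together with `Inst : (e,ε) ↦ ε(e)` is an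
`𝓐`-strategy on the `𝓐`-game `E`. -/
theorem red_Inst_isAStrategy {E A V Srt : Type} (S : ES E) (pol : E → Bool)
    (var : E → V) (sortA : A → Srt) (sortV : V → Srt)
    (hrf : RaceFree S.toPreES pol) (hno : NoOverlap S.toPreES var) :
    IsAStrategy (expn S.toPreES var sortA sortV) S.toPreES
      (fun p => pol p.ev) pol var sortA sortV
      (fun p => red p) (fun p => p.Inst S.le_refl) :=
  red_Inst_isAStrategy_general S pol var sortA sortV
end

section
/- For A-games E over algebra A and F over algebra B, the expansion of the parallel composition is isomorphic to the parallel composition of the expansions: expn_{A||B}(E||F) ≅ expn_A(E) || expn_B(F), as event structures with polarity. -/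
/-! An event of `expn (E ‖ F)` is an event `g` of `E ‖ F` with an instantiation `ε` of `[g]`.
If `g = inl e`, then `[g]` lies in the left component and, the sorts of `A` and `B` being disjoint,
`ε` takes only values in `A`: so `(g, ε)` is an event of `expn E`, and symmetrically on the right.
This bijection `expn E ⊕ expn F ≃ expn (E ‖ F)` matches the orders componentwise, and the
consistency of `expn` (consistent projection on which the projection is injective) splits over
the two components, as does injectivity of a `Sum.map`. -/
theorem Set.preimage_inl_image_sumMap {α β γ δ : Type*} (f : α → γ) (g : β → δ)
    (s : Set (α ⊕ β)) : Sum.inl ⁻¹' (Sum.map f g '' s) = f '' (Sum.inl ⁻¹' s) := by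
  ext; simp

theorem Set.preimage_inr_image_sumMap {α β γ δ : Type*} (f : α → γ) (g : β → δ)
    (s : Set (α ⊕ β)) : Sum.inr ⁻¹' (Sum.map f g '' s) = g '' (Sum.inr ⁻¹' s) := by
  ext; simp

theorem Set.injOn_sumMap_iff {α β γ δ : Type*} {f : α → γ} {g : β → δ} {s : Set (α ⊕ β)} :
    Set.InjOn (Sum.map f g) s ↔
      Set.InjOn f (Sum.inl ⁻¹' s) ∧ Set.InjOn g (Sum.inr ⁻¹' s) := by
  refine ⟨fun h => ⟨fun a ha b hb hab => Sum.inl_injective (h ha hb (by simp [hab])),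
    fun a ha b hb hab => Sum.inr_injective (h ha hb (by simp [hab]))⟩, ?_⟩
  rintro ⟨hl, hr⟩ (a | a) ha (b | b) hb hab <;> simp at hab
  · exact congrArg Sum.inl (hl ha hb hab)
  · exact congrArg Sum.inr (hr ha hb hab)

theorem Option.map_inl_bind_getLeft? {α β : Type*} {o : Option (α ⊕ β)}
    (h : ∀ c ∈ o, c.isLeft) : (o.bind Sum.getLeft?).map Sum.inl = o := by
  rcases o with _ | (a | b)
  · rfl
  · rfl
  · simp at h

theorem Option.map_inr_bind_getRight? {α β : Type*} {o : Option (α ⊕ β)}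
    (h : ∀ c ∈ o, c.isRight) : (o.bind Sum.getRight?).map Sum.inr = o := by
  rcases o with _ | (a | b)
  · rfl
  · simp at h
  · rfl

@[ext]
theorem ExEvent.ext {E A V Srt : Type} {P : PreES E} {var : E → V}
    {sortA : A → Srt} {sortV : V → Srt} {p q : ExEvent P var sortA sortV}
    (hev : p.ev = q.ev) (hinst : p.inst = q.inst) : p = q := by
  cases p; cases q; cases hev; cases hinst; rfl

theorem ExEvent.inst_eq_none_iff {E A V Srt : Type} {P : PreES E} {var : E → V}
    {sortA : A → Srt} {sortV : V → Srt} (p : ExEvent P var sortA sortV) (e : E) :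
    p.inst e = none ↔ ¬ P.le e p.ev := by
  rw [← p.dom, Option.not_isSome_iff_eq_none]

theorem expn_con_iff {E A V Srt : Type} {P : PreES E} {var : E → V}
    {sortA : A → Srt} {sortV : V → Srt} {X : Set (ExEvent P var sortA sortV)} :
    (expn P var sortA sortV).con X ↔ P.con (ExEvent.ev '' X) ∧ Set.InjOn ExEvent.ev X :=
  Iff.rfl

namespace ExEvent

variable {E F A B VE VF SA SB : Type} {P : PreES E} {Q : PreES F}
  {varE : E → VE} {varF : F → VF} {sortA : A → SA} {sortB : B → SB}
  {sortVE : VE → SA} {sortVF : VF → SB}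

local notation "ParEvent" =>
  ExEvent (parPre P Q) (Sum.map varE varF) (Sum.map sortA sortB) (Sum.map sortVE sortVF)

def parInl (u : ExEvent P varE sortA sortVE) : ParEvent where
  ev := .inl u.ev
  inst := Sum.elim (fun d => (u.inst d).map .inl) (fun _ => none)
  dom
    | .inl d => by simpa [parPre] using u.dom d
    | .inr _ => by simp [parPre]
  srt
    | .inl d, _, h => by
      obtain ⟨a, ha, rfl⟩ := Option.map_eq_some_iff.mp h
      simp [u.srt d a ha]
    | .inr _, _, h => by simp at h

def parInr (u : ExEvent Q varF sortB sortVF) : ParEvent where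
  ev := .inr u.ev
  inst := Sum.elim (fun _ => none) (fun d => (u.inst d).map .inr)
  dom
    | .inl _ => by simp [parPre]
    | .inr d => by simpa [parPre] using u.dom d
  srt
    | .inl _, _, h => by simp at h
    | .inr d, _, h => by
      obtain ⟨a, ha, rfl⟩ := Option.map_eq_some_iff.mp h
      simp [u.srt d a ha]

theorem parInl_injective :
    Function.Injective (parInl : ExEvent P varE sortA sortVE → ParEvent) := by
  intro u v huv
  ext1
  · exact Sum.inl_injective (congrArg ev huv)
  · funext d
    exact Option.map_injective Sum.inl_injective (congrFun (congrArg inst huv) (.inl d))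

theorem parInr_injective :
    Function.Injective (parInr : ExEvent Q varF sortB sortVF → ParEvent) := by
  intro u v huv
  ext1
  · exact Sum.inr_injective (congrArg ev huv)
  · funext d
    exact Option.map_injective Sum.inr_injective (congrFun (congrArg inst huv) (.inr d))

theorem parInl_ne_parInr (u : ExEvent P varE sortA sortVE) (v : ExEvent Q varF sortB sortVF) :
    (parInl u : ParEvent) ≠ parInr v :=
  fun h => Sum.inl_ne_inr (congrArg ev h)

theorem inst_inl_isLeft (p : ParEvent) (d : E) : ∀ c ∈ p.inst (.inl d), c.isLeft :=
  fun c hc => by simpa using congrArg Sum.isLeft (p.srt _ c hc)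

theorem inst_inr_isRight (p : ParEvent) (d : F) : ∀ c ∈ p.inst (.inr d), c.isRight :=
  fun c hc => by simpa using congrArg Sum.isRight (p.srt _ c hc)

def parLeft (p : ParEvent) (e : E) (h : p.ev = .inl e) : ExEvent P varE sortA sortVE where
  ev := e
  inst d := (p.inst (.inl d)).bind Sum.getLeft?
  dom d := by
    rw [← Option.isSome_map (f := Sum.inl), Option.map_inl_bind_getLeft? (p.inst_inl_isLeft d),
      p.dom, h]
    rfl
  srt d a ha := by
    have hp : p.inst (.inl d) = some (.inl a) := by
      rw [← Option.map_inl_bind_getLeft? (p.inst_inl_isLeft d), ha]; rfl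
    simpa using p.srt _ _ hp

def parRight (p : ParEvent) (f : F) (h : p.ev = .inr f) : ExEvent Q varF sortB sortVF where
  ev := f
  inst d := (p.inst (.inr d)).bind Sum.getRight?
  dom d := by
    rw [← Option.isSome_map (f := Sum.inr), Option.map_inr_bind_getRight? (p.inst_inr_isRight d),
      p.dom, h]
    rfl
  srt d a ha := by
    have hp : p.inst (.inr d) = some (.inr a) := by
      rw [← Option.map_inr_bind_getRight? (p.inst_inr_isRight d), ha]; rfl
    simpa using p.srt _ _ hp

theorem parInl_parLeft (p : ParEvent) (e : E) (h : p.ev = .inl e) :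
    parInl (p.parLeft e h) = p := by
  ext1
  · exact h.symm
  · funext d
    cases d with
    | inl d => exact Option.map_inl_bind_getLeft? (p.inst_inl_isLeft d)
    | inr f => exact ((p.inst_eq_none_iff _).mpr (by simp [h, parPre])).symm

theorem parInr_parRight (p : ParEvent) (f : F) (h : p.ev = .inr f) :
    parInr (p.parRight f h) = p := by
  ext1
  · exact h.symm
  · funext d
    cases d with
    | inl e => exact ((p.inst_eq_none_iff _).mpr (by simp [h, parPre])).symm
    | inr d => exact Option.map_inr_bind_getRight? (p.inst_inr_isRight d)

theorem sumElim_parInl_parInr_bijective :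
    Function.Bijective (Sum.elim parInl parInr : _ → ParEvent) := by
  refine ⟨parInl_injective.sumElim parInr_injective parInl_ne_parInr, fun p => ?_⟩
  rcases h : p.ev with e | f
  · exact ⟨.inl (p.parLeft e h), parInl_parLeft p e h⟩
  · exact ⟨.inr (p.parRight f h), parInr_parRight p f h⟩

noncomputable def sumEquivPar :
    ExEvent P varE sortA sortVE ⊕ ExEvent Q varF sortB sortVF ≃ ParEvent :=
  Equiv.ofBijective _ sumElim_parInl_parInr_bijective

theorem ev_sumEquivPar (a : ExEvent P varE sortA sortVE ⊕ ExEvent Q varF sortB sortVF) :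
    (sumEquivPar a : ParEvent).ev = Sum.map ev ev a := by
  cases a <;> rfl

@[simp]
theorem sumEquivPar_inl (u : ExEvent P varE sortA sortVE) :
    (sumEquivPar (.inl u) : ParEvent) = parInl u := rfl

@[simp]
theorem sumEquivPar_inr (u : ExEvent Q varF sortB sortVF) :
    (sumEquivPar (.inr u) : ParEvent) = parInr u := rfl

theorem le_sumEquivPar_iff (a b : ExEvent P varE sortA sortVE ⊕ ExEvent Q varF sortB sortVF) :
    (expn (parPre P Q) (Sum.map varE varF) (Sum.map sortA sortB) (Sum.map sortVE sortVF)).le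
        (sumEquivPar a) (sumEquivPar b) ↔
      (parPre (expn P varE sortA sortVE) (expn Q varF sortB sortVF)).le a b := by
  rcases a with u | u <;> rcases b with v | v <;> simp only [sumEquivPar_inl, sumEquivPar_inr]
  all_goals simp [expn, parPre, parInl, parInr, Sum.forall,
    (Option.map_injective Sum.inl_injective).eq_iff,
    (Option.map_injective Sum.inr_injective).eq_iff]

theorem con_image_sumEquivPar_iff
    (W : Set (ExEvent P varE sortA sortVE ⊕ ExEvent Q varF sortB sortVF)) :
    (expn (parPre P Q) (Sum.map varE varF) (Sum.map sortA sortB) (Sum.map sortVE sortVF)).con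
        (sumEquivPar '' W) ↔
      (parPre (expn P varE sortA sortVE) (expn Q varF sortB sortVF)).con W := by
  have hev : ev ∘ (sumEquivPar : _ → ParEvent) = Sum.map ev ev := funext ev_sumEquivPar
  rw [expn_con_iff, ← sumEquivPar.injective.injOn.comp_iff, ← Set.image_comp, hev]
  change (P.con (Sum.inl ⁻¹' _) ∧ Q.con (Sum.inr ⁻¹' _)) ∧ _ ↔
    (expn _ _ _ _).con _ ∧ (expn _ _ _ _).con _
  rw [Set.preimage_inl_image_sumMap, Set.preimage_inr_image_sumMap, Set.injOn_sumMap_iff,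
    expn_con_iff, expn_con_iff]
  tauto

end ExEvent

/-- the expansion of a parallel composition of games is isomorphic
(as an event structure with polarity) to the parallel composition of the
expansions: `expn_{𝓐‖𝓑}(E‖F) ≅ expn_𝓐(E) ‖ expn_𝓑(F)`. -/
theorem expn_par_iso {GE GF A B VA VB SA SB : Type}
    (PE : ES GE) (PF : ES GF) (polE : GE → Bool) (polF : GF → Bool)
    (varE : GE → VA) (varF : GF → VB)
    (sortA : A → SA) (sortB : B → SB) (sortVA : VA → SA) (sortVB : VB → SB) :
    let X := expn (parPre PE.toPreES PF.toPreES) (Sum.map varE varF)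
      (Sum.map sortA sortB) (Sum.map sortVA sortVB)
    let Y := parPre (expn PE.toPreES varE sortA sortVA)
      (expn PF.toPreES varF sortB sortVB)
    ∃ φ : ExEvent (parPre PE.toPreES PF.toPreES) (Sum.map varE varF)
            (Sum.map sortA sortB) (Sum.map sortVA sortVB) ≃
          (ExEvent PE.toPreES varE sortA sortVA ⊕ ExEvent PF.toPreES varF sortB sortVB),
      (∀ p q, X.le p q ↔ Y.le (φ p) (φ q)) ∧
      (∀ Z, X.con Z ↔ Y.con (φ '' Z)) ∧
      (∀ p, Sum.elim polE polF p.ev =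
        Sum.elim (fun q => polE q.ev) (fun q => polF q.ev) (φ p)) := by
  intro X Y
  refine ⟨ExEvent.sumEquivPar.symm, fun p q => ?_, fun Z => ?_, fun p => ?_⟩
  · simpa using
      ExEvent.le_sumEquivPar_iff (ExEvent.sumEquivPar.symm p) (ExEvent.sumEquivPar.symm q)
  · simpa [Equiv.image_symm_image] using
      ExEvent.con_image_sumEquivPar_iff (ExEvent.sumEquivPar.symm '' Z)
  · obtain ⟨a, rfl⟩ := ExEvent.sumEquivPar.surjective p
    rw [Equiv.symm_apply_apply, ExEvent.ev_sumEquivPar]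
    cases a <;> rfl
end

section
/- For an A||B-strategy σ : S → E||F with winning conditions W_E over A and W_F over B, a configuration x of S satisfies W_E ∨ W_F (under the free-logic semantics for σ) if and only if its projection x_E satisfies W_E under σ_E or its projection x_F satisfies W_F under σ_F. -/
/-- Terms of the free logic: variables or algebra elements. -/
inductive Trm (V A : Type) where
  | var : V → Trm V A
  | el : A → Trm V A

/-- Assertions of the free logic over a signature `R` (with arity `ar`),
variables `V` and algebra elements `A`; includes countable conjunctions and
disjunctions. -/
inductive Assrt (R V A : Type) (ar : R → ℕ) : Type 1 where
  | rel (r : R) (ts : Fin (ar r) → Trm V A) : Assrt R V A ar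
  | eq (t₁ t₂ : Trm V A) : Assrt R V A ar
  | ex (t : Trm V A) : Assrt R V A ar
  | conj2 (φ ψ : Assrt R V A ar) : Assrt R V A ar
  | disj2 (φ ψ : Assrt R V A ar) : Assrt R V A ar
  | neg (φ : Assrt R V A ar) : Assrt R V A ar
  | all (α : V) (φ : Assrt R V A ar) : Assrt R V A ar
  | exi (α : V) (φ : Assrt R V A ar) : Assrt R V A ar
  | conj (I : Type) (hI : Countable I) (f : I → Assrt R V A ar) : Assrt R V A ar
  | disj (I : Type) (hI : Countable I) (f : I → Assrt R V A ar) : Assrt R V A ar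

variable {R V A : Type} {ar : R → ℕ}

/-- Ordinal size of an assertion. -/
noncomputable def Assrt.size : Assrt R V A ar → Ordinal.{0}
  | .rel r _ => (ar r : Ordinal) + 1
  | .eq _ _ => 3
  | .ex _ => 2
  | .conj2 φ ψ => max φ.size ψ.size + 1
  | .disj2 φ ψ => max φ.size ψ.size + 1
  | .neg φ => φ.size + 1
  | .all _ φ => φ.size + 1
  | .exi _ φ => φ.size + 1
  | .conj _ _ f => (⨆ i, (f i).size) + 1
  | .disj _ _ f => (⨆ i, (f i).size) + 1

/-- Substitution of the element `a` for the variable `α` in a term. -/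
def Trm.subst [DecidableEq V] (α : V) (a : A) : Trm V A → Trm V A
  | .var β => if β = α then .el a else .var β
  | .el b => .el b

/-- Substitution of the element `a` for the free occurrences of `α`. -/
def Assrt.subst [DecidableEq V] (α : V) (a : A) : Assrt R V A ar → Assrt R V A ar
  | .rel r ts => .rel r (fun i => (ts i).subst α a)
  | .eq t₁ t₂ => .eq (t₁.subst α a) (t₂.subst α a)
  | .ex t => .ex (t.subst α a)
  | .conj2 φ ψ => .conj2 (φ.subst α a) (ψ.subst α a)
  | .disj2 φ ψ => .disj2 (φ.subst α a) (ψ.subst α a)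
  | .neg φ => .neg (φ.subst α a)
  | .all β φ => if β = α then .all β φ else .all β (φ.subst α a)
  | .exi β φ => if β = α then .exi β φ else .exi β (φ.subst α a)
  | .conj I hI f => .conj I hI (fun i => (f i).subst α a)
  | .disj I hI f => .disj I hI (fun i => (f i).subst α a)

section Semantics

variable {S G A : Type} {Srt : Type}

/-- `g` is the `≤`-latest event of `y` carrying variable `α`. -/
def IsLatest (leG : G → G → Prop) (var : G → V) (α : V) (y : Set G) (g : G) : Prop :=
  g ∈ y ∧ var g = α ∧ ∀ g' ∈ y, var g' = α → leG g' g

/-- `last(x)`: instantiations of the latest occurrences of variables in `σ x`. -/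
def lastSet (leG : G → G → Prop) (var : G → V) (σ : S → G) (inst : S → A)
    (x : Set S) : Set A :=
  {a | ∃ s ∈ x, inst s = a ∧ ∃ α, IsLatest leG var α (σ '' x) (σ s)}

/-- A term is defined at a configuration `x`. -/
def TDef (leG : G → G → Prop) (var : G → V) (σ : S → G) (inst : S → A)
    (x : Set S) : Trm V A → Prop
  | .var α => α ∈ var '' (σ '' x)
  | .el a => a ∈ lastSet leG var σ inst x

/-- The value relation `t[x] = a`. -/
def TVal (leG : G → G → Prop) (var : G → V) (σ : S → G) (inst : S → A)
    (x : Set S) : Trm V A → A → Prop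
  | .var α, a => ∃ s ∈ x, IsLatest leG var α (σ '' x) (σ s) ∧ inst s = a
  | .el b, a => a = b

/-- Application of a substitution environment to a term. -/
def tsub (ρ : V → Trm V A) : Trm V A → Trm V A
  | .var α => ρ α
  | .el a => .el a

/-- Semantics of the free logic relative to a strategy `σ, inst`, with a
substitution environment `ρ` (quantifiers substitute elements for variables). -/
def sem [DecidableEq V] (leG : G → G → Prop) (var : G → V) (σ : S → G)
    (inst : S → A) (sortA : A → Srt) (sortV : V → Srt)
    (interp : (r : R) → (Fin (ar r) → A) → Prop)
    (ρ : V → Trm V A) : Assrt R V A ar → Set (Set S)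
  | .rel r ts =>
    {x | (∀ i, TDef leG var σ inst x (tsub ρ (ts i))) ∧
      ∃ v : Fin (ar r) → A,
        (∀ i, TVal leG var σ inst x (tsub ρ (ts i)) (v i)) ∧ interp r v}
  | .eq t₁ t₂ =>
    {x | TDef leG var σ inst x (tsub ρ t₁) ∧ TDef leG var σ inst x (tsub ρ t₂) ∧
      ∃ a, TVal leG var σ inst x (tsub ρ t₁) a ∧ TVal leG var σ inst x (tsub ρ t₂) a}
  | .ex t => {x | TDef leG var σ inst x (tsub ρ t)}
  | .conj2 φ ψ => sem leG var σ inst sortA sortV interp ρ φ ∩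
      sem leG var σ inst sortA sortV interp ρ ψ
  | .disj2 φ ψ => sem leG var σ inst sortA sortV interp ρ φ ∪
      sem leG var σ inst sortA sortV interp ρ ψ
  | .neg φ => (sem leG var σ inst sortA sortV interp ρ φ)ᶜ
  | .all α φ =>
    {x | ∀ a, sortA a = sortV α → a ∈ lastSet leG var σ inst x →
      x ∈ sem leG var σ inst sortA sortV interp
        (fun β => if β = α then Trm.el a else ρ β) φ}
  | .exi α φ =>
    {x | ∃ a, sortA a = sortV α ∧ a ∈ lastSet leG var σ inst x ∧
      x ∈ sem leG var σ inst sortA sortV interp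
        (fun β => if β = α then Trm.el a else ρ β) φ}
  | .conj _ _ f => {x | ∀ i, x ∈ sem leG var σ inst sortA sortV interp ρ (f i)}
  | .disj _ _ f => {x | ∃ i, x ∈ sem leG var σ inst sortA sortV interp ρ (f i)}

end Semantics

/-- Renaming of terms along maps of variables and elements. -/
def Trm.rename {V V' A A' : Type} (fv : V → V') (fa : A → A') :
    Trm V A → Trm V' A'
  | .var α => .var (fv α)
  | .el a => .el (fa a)

/-- Renaming of assertions along maps of relation symbols (arity preserving),
variables and elements. -/
def Assrt.rename {R R' V V' A A' : Type} {ar : R → ℕ} {ar' : R' → ℕ}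
    (fr : R → R') (har : ∀ r, ar' (fr r) = ar r)
    (fv : V → V') (fa : A → A') : Assrt R V A ar → Assrt R' V' A' ar'
  | .rel r ts => .rel (fr r) (fun i => (ts (Fin.cast (har r) i)).rename fv fa)
  | .eq t₁ t₂ => .eq (t₁.rename fv fa) (t₂.rename fv fa)
  | .ex t => .ex (t.rename fv fa)
  | .conj2 φ ψ => .conj2 (φ.rename fr har fv fa) (ψ.rename fr har fv fa)
  | .disj2 φ ψ => .disj2 (φ.rename fr har fv fa) (ψ.rename fr har fv fa)
  | .neg φ => .neg (φ.rename fr har fv fa)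
  | .all α φ => .all (fv α) (φ.rename fr har fv fa)
  | .exi α φ => .exi (fv α) (φ.rename fr har fv fa)
  | .conj I hI f => .conj I hI (fun i => (f i).rename fr har fv fa)
  | .disj I hI f => .disj I hI (fun i => (f i).rename fr har fv fa)

/-- Interpretation of the disjoint-union signature `Σ_𝓐 ⊎ Σ_𝓑` in the
disjoint-union algebra `𝓐‖𝓑`. -/
def interpSum {RA RB A B : Type} {arA : RA → ℕ} {arB : RB → ℕ}
    (interpA : (r : RA) → (Fin (arA r) → A) → Prop)
    (interpB : (r : RB) → (Fin (arB r) → B) → Prop) :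
    (r : RA ⊕ RB) → (Fin (Sum.elim arA arB r) → A ⊕ B) → Prop
  | .inl r => fun v => ∃ w : Fin (arA r) → A,
      (∀ i, v i = Sum.inl (w i)) ∧ interpA r w
  | .inr r => fun v => ∃ w : Fin (arB r) → B,
      (∀ i, v i = Sum.inr (w i)) ∧ interpB r w

section CompLemmas

variable {S G G₀ V V₀ A A₀ Srt Srt₀ : Type}

theorem comp_image (σ : S → G) (p : S → Prop) (σ₀ : {s // p s} → G₀) (ιG : G₀ → G)
    (hιG : Function.Injective ιG)
    (hσ : ∀ s : {s // p s}, σ s.1 = ιG (σ₀ s))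
    (hp : ∀ s g₀, σ s = ιG g₀ → p s)
    (x : Set S) (g : G₀) :
    ιG g ∈ σ '' x ↔ g ∈ σ₀ '' {s : {s // p s} | s.1 ∈ x} := by
  constructor
  · rintro ⟨s, hs, hsg⟩
    have ps := hp s g hsg
    exact ⟨⟨s, ps⟩, hs, hιG ((hσ ⟨s, ps⟩).symm.trans hsg)⟩
  · rintro ⟨s, hs, rfl⟩
    exact ⟨s.1, hs, hσ s⟩

theorem comp_latest (leG : G → G → Prop) (var : G → V) (σ : S → G)
    (le₀ : G₀ → G₀ → Prop) (var₀ : G₀ → V₀) (p : S → Prop)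
    (σ₀ : {s // p s} → G₀) (ιG : G₀ → G) (ιV : V₀ → V)
    (hle : ∀ g g', leG (ιG g) (ιG g') ↔ le₀ g g')
    (hvar : ∀ g, var (ιG g) = ιV (var₀ g))
    (hιV : Function.Injective ιV) (hιG : Function.Injective ιG)
    (hrange : ∀ g α₀, var g = ιV α₀ → ∃ g₀, g = ιG g₀)
    (hσ : ∀ s : {s // p s}, σ s.1 = ιG (σ₀ s))
    (hp : ∀ s g₀, σ s = ιG g₀ → p s)
    (x : Set S) (α₀ : V₀) (g : G₀) :
    IsLatest leG var (ιV α₀) (σ '' x) (ιG g) ↔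
      IsLatest le₀ var₀ α₀ (σ₀ '' {s : {s // p s} | s.1 ∈ x}) g := by
  constructor
  · rintro ⟨hmem, hv, hmax⟩
    refine ⟨(comp_image σ p σ₀ ιG hιG hσ hp x g).mp hmem, hιV ((hvar g).symm.trans hv), ?_⟩
    intro g' hg' hv'
    have : ιG g' ∈ σ '' x := (comp_image σ p σ₀ ιG hιG hσ hp x g').mpr hg'
    exact (hle g' g).mp (hmax (ιG g') this ((hvar g').trans (by rw [hv'])))
  · rintro ⟨hmem, hv, hmax⟩
    refine ⟨(comp_image σ p σ₀ ιG hιG hσ hp x g).mpr hmem, by rw [hvar, hv], ?_⟩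
    intro g' hg' hv'
    obtain ⟨g₀', rfl⟩ := hrange g' α₀ hv'
    have hv₀ : var₀ g₀' = α₀ := hιV ((hvar g₀').symm.trans hv')
    have : g₀' ∈ σ₀ '' {s : {s // p s} | s.1 ∈ x} :=
      (comp_image σ p σ₀ ιG hιG hσ hp x g₀').mp hg'
    exact (hle g₀' g).mpr (hmax g₀' this hv₀)

theorem comp_lastSet (leG : G → G → Prop) (var : G → V) (σ : S → G) (inst : S → A)
    (le₀ : G₀ → G₀ → Prop) (var₀ : G₀ → V₀) (p : S → Prop)
    (σ₀ : {s // p s} → G₀) (inst₀ : {s // p s} → A₀)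
    (ιG : G₀ → G) (ιV : V₀ → V) (ιA : A₀ → A)
    (hle : ∀ g g', leG (ιG g) (ιG g') ↔ le₀ g g')
    (hvar : ∀ g, var (ιG g) = ιV (var₀ g))
    (hιV : Function.Injective ιV) (hιA : Function.Injective ιA)
    (hιG : Function.Injective ιG)
    (hrange : ∀ g α₀, var g = ιV α₀ → ∃ g₀, g = ιG g₀)
    (hσ : ∀ s : {s // p s}, σ s.1 = ιG (σ₀ s))
    (hp : ∀ s g₀, σ s = ιG g₀ → p s)
    (hinst : ∀ s : {s // p s}, inst s.1 = ιA (inst₀ s))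
    (hinstp : ∀ s a₀, inst s = ιA a₀ → p s)
    (x : Set S) (a₀ : A₀) :
    ιA a₀ ∈ lastSet leG var σ inst x ↔
      a₀ ∈ lastSet le₀ var₀ σ₀ inst₀ {s : {s // p s} | s.1 ∈ x} := by
  constructor
  · rintro ⟨s, hs, hi, α, hlat⟩
    have ps := hinstp s a₀ hi
    set s' : {s // p s} := ⟨s, ps⟩ with hs'
    have hσs : σ s = ιG (σ₀ s') := hσ s'
    have hα : α = ιV (var₀ (σ₀ s')) := by
      rw [← hlat.2.1, hσs, hvar]
    have hlat' : IsLatest leG var (ιV (var₀ (σ₀ s'))) (σ '' x) (ιG (σ₀ s')) := by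
      rw [← hα, ← hσs]; exact hlat
    refine ⟨s', hs, hιA ((hinst s').symm.trans hi), var₀ (σ₀ s'), ?_⟩
    exact (comp_latest leG var σ le₀ var₀ p σ₀ ιG ιV hle hvar hιV hιG hrange hσ hp
      x _ _).mp hlat'
  · rintro ⟨s', hs', hi, α₀, hlat₀⟩
    refine ⟨s'.1, hs', by rw [hinst s', hi], ιV α₀, ?_⟩
    rw [hσ s']
    exact (comp_latest leG var σ le₀ var₀ p σ₀ ιG ιV hle hvar hιV hιG hrange hσ hp
      x _ _).mpr hlat₀

theorem comp_tdef (leG : G → G → Prop) (var : G → V) (σ : S → G) (inst : S → A)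
    (le₀ : G₀ → G₀ → Prop) (var₀ : G₀ → V₀) (p : S → Prop)
    (σ₀ : {s // p s} → G₀) (inst₀ : {s // p s} → A₀)
    (ιG : G₀ → G) (ιV : V₀ → V) (ιA : A₀ → A)
    (hle : ∀ g g', leG (ιG g) (ιG g') ↔ le₀ g g')
    (hvar : ∀ g, var (ιG g) = ιV (var₀ g))
    (hιV : Function.Injective ιV) (hιA : Function.Injective ιA)
    (hιG : Function.Injective ιG)
    (hrange : ∀ g α₀, var g = ιV α₀ → ∃ g₀, g = ιG g₀)
    (hσ : ∀ s : {s // p s}, σ s.1 = ιG (σ₀ s))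
    (hp : ∀ s g₀, σ s = ιG g₀ → p s)
    (hinst : ∀ s : {s // p s}, inst s.1 = ιA (inst₀ s))
    (hinstp : ∀ s a₀, inst s = ιA a₀ → p s)
    (x : Set S) (t : Trm V₀ A₀) :
    TDef leG var σ inst x (t.rename ιV ιA) ↔
      TDef le₀ var₀ σ₀ inst₀ {s : {s // p s} | s.1 ∈ x} t := by
  cases t with
  | var α₀ =>
    show ιV α₀ ∈ var '' (σ '' x) ↔ α₀ ∈ var₀ '' (σ₀ '' _)
    constructor
    · rintro ⟨g, hg, hvg⟩
      obtain ⟨g₀, rfl⟩ := hrange g α₀ hvg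
      exact ⟨g₀, (comp_image σ p σ₀ ιG hιG hσ hp x g₀).mp hg,
        hιV ((hvar g₀).symm.trans hvg)⟩
    · rintro ⟨g₀, hg₀, rfl⟩
      exact ⟨ιG g₀, (comp_image σ p σ₀ ιG hιG hσ hp x g₀).mpr hg₀, hvar g₀⟩
  | el a₀ =>
    exact comp_lastSet leG var σ inst le₀ var₀ p σ₀ inst₀ ιG ιV ιA hle hvar hιV hιA
      hιG hrange hσ hp hinst hinstp x a₀

theorem comp_tval (leG : G → G → Prop) (var : G → V) (σ : S → G) (inst : S → A)
    (le₀ : G₀ → G₀ → Prop) (var₀ : G₀ → V₀) (p : S → Prop)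
    (σ₀ : {s // p s} → G₀) (inst₀ : {s // p s} → A₀)
    (ιG : G₀ → G) (ιV : V₀ → V) (ιA : A₀ → A)
    (hle : ∀ g g', leG (ιG g) (ιG g') ↔ le₀ g g')
    (hvar : ∀ g, var (ιG g) = ιV (var₀ g))
    (hιV : Function.Injective ιV) (hιA : Function.Injective ιA)
    (hιG : Function.Injective ιG)
    (hrange : ∀ g α₀, var g = ιV α₀ → ∃ g₀, g = ιG g₀)
    (hσ : ∀ s : {s // p s}, σ s.1 = ιG (σ₀ s))
    (hp : ∀ s g₀, σ s = ιG g₀ → p s)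
    (hinst : ∀ s : {s // p s}, inst s.1 = ιA (inst₀ s))
    (x : Set S) (t : Trm V₀ A₀) (a : A) :
    TVal leG var σ inst x (t.rename ιV ιA) a ↔
      ∃ a₀, a = ιA a₀ ∧ TVal le₀ var₀ σ₀ inst₀ {s : {s // p s} | s.1 ∈ x} t a₀ := by
  cases t with
  | var α₀ =>
    constructor
    · rintro ⟨s, hs, hlat, hi⟩
      obtain ⟨g₀, hg₀⟩ := hrange (σ s) α₀ hlat.2.1
      have ps := hp s g₀ hg₀
      set s' : {s // p s} := ⟨s, ps⟩ with hs'
      have hσs : σ s = ιG (σ₀ s') := hσ s'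
      refine ⟨inst₀ s', by rw [← hi, hinst s'], s', hs, ?_, rfl⟩
      refine (comp_latest leG var σ le₀ var₀ p σ₀ ιG ιV hle hvar hιV hιG hrange hσ hp
        x _ _).mp ?_
      rw [← hσs]; exact hlat
    · rintro ⟨a₀, rfl, s', hs', hlat₀, hi₀⟩
      refine ⟨s'.1, hs', ?_, by rw [hinst s', hi₀]⟩
      rw [hσ s']
      exact (comp_latest leG var σ le₀ var₀ p σ₀ ιG ιV hle hvar hιV hιG hrange hσ hp
        x _ _).mpr hlat₀
  | el b =>
    constructor
    · rintro rfl; exact ⟨b, rfl, rfl⟩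
    · rintro ⟨a₀, rfl, rfl⟩; rfl

theorem tsub_rename {V V₀ A A₀ : Type} (ιV : V₀ → V) (ιA : A₀ → A)
    (ρ₀ : V₀ → Trm V₀ A₀) (ρ : V → Trm V A)
    (hρ : ∀ β, ρ (ιV β) = (ρ₀ β).rename ιV ιA) (t : Trm V₀ A₀) :
    tsub ρ (t.rename ιV ιA) = (tsub ρ₀ t).rename ιV ιA := by
  cases t with
  | var α => exact hρ α
  | el a => rfl

end CompLemmas

theorem sem_comp {S G G₀ V V₀ A A₀ Srt Srt₀ R R₀ : Type}
    [DecidableEq V] [DecidableEq V₀] {ar : R → ℕ} {ar₀ : R₀ → ℕ}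
    (leG : G → G → Prop) (var : G → V) (σ : S → G) (inst : S → A)
    (sortA : A → Srt) (sortV : V → Srt)
    (interp : (r : R) → (Fin (ar r) → A) → Prop)
    (le₀ : G₀ → G₀ → Prop) (var₀ : G₀ → V₀) (p : S → Prop)
    (σ₀ : {s // p s} → G₀) (inst₀ : {s // p s} → A₀)
    (sortA₀ : A₀ → Srt₀) (sortV₀ : V₀ → Srt₀)
    (interp₀ : (r : R₀) → (Fin (ar₀ r) → A₀) → Prop)
    (ιG : G₀ → G) (ιV : V₀ → V) (ιA : A₀ → A) (ιR : R₀ → R)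
    (har : ∀ r, ar (ιR r) = ar₀ r)
    (hle : ∀ g g', leG (ιG g) (ιG g') ↔ le₀ g g')
    (hvar : ∀ g, var (ιG g) = ιV (var₀ g))
    (hιV : Function.Injective ιV) (hιA : Function.Injective ιA)
    (hιG : Function.Injective ιG)
    (hrange : ∀ g α₀, var g = ιV α₀ → ∃ g₀, g = ιG g₀)
    (hσ : ∀ s : {s // p s}, σ s.1 = ιG (σ₀ s))
    (hp : ∀ s g₀, σ s = ιG g₀ → p s)
    (hinst : ∀ s : {s // p s}, inst s.1 = ιA (inst₀ s))
    (hinstp : ∀ s a₀, inst s = ιA a₀ → p s)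
    (hsort1 : ∀ a₀ α₀, sortA₀ a₀ = sortV₀ α₀ → sortA (ιA a₀) = sortV (ιV α₀))
    (hsort2 : ∀ a α₀, sortA a = sortV (ιV α₀) → ∃ a₀, a = ιA a₀ ∧ sortA₀ a₀ = sortV₀ α₀)
    (hinterp : ∀ r (v : Fin (ar (ιR r)) → A), interp (ιR r) v ↔
      ∃ w : Fin (ar₀ r) → A₀, (∀ i, v i = ιA (w (Fin.cast (har r) i))) ∧ interp₀ r w)
    (x : Set S) (φ : Assrt R₀ V₀ A₀ ar₀) :
    ∀ (ρ₀ : V₀ → Trm V₀ A₀) (ρ : V → Trm V A),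
      (∀ β, ρ (ιV β) = (ρ₀ β).rename ιV ιA) →
      (x ∈ sem leG var σ inst sortA sortV interp ρ (φ.rename ιR har ιV ιA) ↔
        {s : {s // p s} | s.1 ∈ x} ∈
          sem le₀ var₀ σ₀ inst₀ sortA₀ sortV₀ interp₀ ρ₀ φ) := by
  have Htd := comp_tdef leG var σ inst le₀ var₀ p σ₀ inst₀ ιG ιV ιA hle hvar hιV hιA
    hιG hrange hσ hp hinst hinstp x
  have Htv := comp_tval leG var σ inst le₀ var₀ p σ₀ inst₀ ιG ιV ιA hle hvar hιV hιA
    hιG hrange hσ hp hinst x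
  have Hls := comp_lastSet leG var σ inst le₀ var₀ p σ₀ inst₀ ιG ιV ιA hle hvar hιV hιA
    hιG hrange hσ hp hinst hinstp x
  induction φ with
  | rel r ts =>
    intro ρ₀ ρ hρ
    have hsub := tsub_rename ιV ιA ρ₀ ρ hρ
    have hsurj : Function.Surjective (Fin.cast (har r)) :=
      (finCongr (har r)).surjective
    simp only [Assrt.rename, sem, Set.mem_setOf_eq]
    constructor
    · rintro ⟨hd, v, hv, hi⟩
      obtain ⟨w, hw, hi₀⟩ := (hinterp r v).mp hi
      refine ⟨?_, w, ?_, hi₀⟩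
      · intro i₀
        obtain ⟨i, rfl⟩ := hsurj i₀
        have := hd i; rw [hsub] at this
        exact (Htd _).mp this
      · intro i₀
        obtain ⟨i, rfl⟩ := hsurj i₀
        have := hv i; rw [hsub] at this
        obtain ⟨a₀, ha₀, htv₀⟩ := (Htv _ _).mp this
        have : a₀ = w (Fin.cast (har r) i) := hιA (ha₀.symm.trans (hw i))
        rwa [this] at htv₀
    · rintro ⟨hd₀, w, hw₀, hi₀⟩
      refine ⟨?_, fun i => ιA (w (Fin.cast (har r) i)), ?_, ?_⟩
      · intro i; rw [hsub]; exact (Htd _).mpr (hd₀ _)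
      · intro i; rw [hsub]; exact (Htv _ _).mpr ⟨w (Fin.cast (har r) i), rfl, hw₀ _⟩
      · exact (hinterp r _).mpr ⟨w, fun i => rfl, hi₀⟩
  | eq t₁ t₂ =>
    intro ρ₀ ρ hρ
    have hsub := tsub_rename ιV ιA ρ₀ ρ hρ
    simp only [Assrt.rename, sem, Set.mem_setOf_eq, hsub]
    constructor
    · rintro ⟨h1, h2, a, hv1, hv2⟩
      obtain ⟨a₀, rfl, hv1₀⟩ := (Htv _ _).mp hv1
      obtain ⟨a₀', ha', hv2₀⟩ := (Htv _ _).mp hv2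
      exact ⟨(Htd _).mp h1, (Htd _).mp h2, a₀, hv1₀, hιA ha' ▸ hv2₀⟩
    · rintro ⟨h1, h2, a₀, hv1₀, hv2₀⟩
      exact ⟨(Htd _).mpr h1, (Htd _).mpr h2, ιA a₀,
        (Htv _ _).mpr ⟨a₀, rfl, hv1₀⟩, (Htv _ _).mpr ⟨a₀, rfl, hv2₀⟩⟩
  | ex t =>
    intro ρ₀ ρ hρ
    have hsub := tsub_rename ιV ιA ρ₀ ρ hρ
    simp only [Assrt.rename, sem, Set.mem_setOf_eq, hsub]
    exact Htd _
  | conj2 φ ψ ihφ ihψ =>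
    intro ρ₀ ρ hρ
    simp only [Assrt.rename, sem, Set.mem_inter_iff]
    exact and_congr (ihφ ρ₀ ρ hρ) (ihψ ρ₀ ρ hρ)
  | disj2 φ ψ ihφ ihψ =>
    intro ρ₀ ρ hρ
    simp only [Assrt.rename, sem, Set.mem_union]
    exact or_congr (ihφ ρ₀ ρ hρ) (ihψ ρ₀ ρ hρ)
  | neg φ ih =>
    intro ρ₀ ρ hρ
    simp only [Assrt.rename, sem, Set.mem_compl_iff]
    exact not_congr (ih ρ₀ ρ hρ)
  | all α₀ φ ih =>
    intro ρ₀ ρ hρ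
    have hρ' : ∀ a₀ β, (if ιV β = ιV α₀ then Trm.el (ιA a₀) else ρ (ιV β)) =
        ((if β = α₀ then Trm.el a₀ else ρ₀ β).rename ιV ιA) := by
      intro a₀ β
      by_cases hb : β = α₀
      · subst hb; rw [if_pos rfl, if_pos rfl]; rfl
      · rw [if_neg (fun hc => hb (hιV hc)), if_neg hb, hρ β]
    simp only [Assrt.rename, sem, Set.mem_setOf_eq]
    constructor
    · intro h a₀ hs₀ hl₀
      exact (ih _ _ (hρ' a₀)).mp
        (h (ιA a₀) (hsort1 a₀ α₀ hs₀) ((Hls a₀).mpr hl₀))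
    · intro h a hs hl
      obtain ⟨a₀, rfl, hs₀⟩ := hsort2 a α₀ hs
      exact (ih _ _ (hρ' a₀)).mpr (h a₀ hs₀ ((Hls a₀).mp hl))
  | exi α₀ φ ih =>
    intro ρ₀ ρ hρ
    have hρ' : ∀ a₀ β, (if ιV β = ιV α₀ then Trm.el (ιA a₀) else ρ (ιV β)) =
        ((if β = α₀ then Trm.el a₀ else ρ₀ β).rename ιV ιA) := by
      intro a₀ β
      by_cases hb : β = α₀
      · subst hb; rw [if_pos rfl, if_pos rfl]; rfl
      · rw [if_neg (fun hc => hb (hιV hc)), if_neg hb, hρ β]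
    simp only [Assrt.rename, sem, Set.mem_setOf_eq]
    constructor
    · rintro ⟨a, hs, hl, hsem⟩
      obtain ⟨a₀, rfl, hs₀⟩ := hsort2 a α₀ hs
      exact ⟨a₀, hs₀, (Hls a₀).mp hl, (ih _ _ (hρ' a₀)).mp hsem⟩
    · rintro ⟨a₀, hs₀, hl₀, hsem₀⟩
      exact ⟨ιA a₀, hsort1 a₀ α₀ hs₀, (Hls a₀).mpr hl₀,
        (ih _ _ (hρ' a₀)).mpr hsem₀⟩
  | conj I hI f ih =>
    intro ρ₀ ρ hρ
    simp only [Assrt.rename, sem, Set.mem_setOf_eq]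
    exact forall_congr' fun i => ih i ρ₀ ρ hρ
  | disj I hI f ih =>
    intro ρ₀ ρ hρ
    simp only [Assrt.rename, sem, Set.mem_setOf_eq]
    exact exists_congr fun i => ih i ρ₀ ρ hρ

/-- for an `𝓐‖𝓑`-strategy `σ : S → E‖F` with winning conditions
`W_E` over `𝓐` and `W_F` over `𝓑`, a configuration `x` of `S` satisfies
`W_E ∨ W_F` iff its projection `x_E` satisfies `W_E` under `σ_E` or its
projection `x_F` satisfies `W_F` under `σ_F`. -/
theorem winning_par_iff {SEv GE GF A B VA VB SA SB RA RB : Type}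
    [DecidableEq VA] [DecidableEq VB]
    {arA : RA → ℕ} {arB : RB → ℕ}
    (interpA : (r : RA) → (Fin (arA r) → A) → Prop)
    (interpB : (r : RB) → (Fin (arB r) → B) → Prop)
    (SS : ES SEv) (PE : ES GE) (PF : ES GF)
    (polS : SEv → Bool) (polE : GE → Bool) (polF : GF → Bool)
    (varE : GE → VA) (varF : GF → VB)
    (sortA : A → SA) (sortB : B → SB) (sortVA : VA → SA) (sortVB : VB → SB)
    (hrfE : RaceFree PE.toPreES polE) (hrfF : RaceFree PF.toPreES polF)
    (hnoE : NoOverlap PE.toPreES varE) (hnoF : NoOverlap PF.toPreES varF)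
    (σ : SEv → GE ⊕ GF) (inst : SEv → A ⊕ B)
    (hstrat : IsAStrategy SS.toPreES (parPre PE.toPreES PF.toPreES) polS
      (Sum.elim polE polF) (Sum.map varE varF)
      (Sum.map sortA sortB) (Sum.map sortVA sortVB) σ inst)
    -- the two defined parts of `σ` with their inherited instantiations
    (σE : {s : SEv // (σ s).isLeft} → GE) (instE : {s : SEv // (σ s).isLeft} → A)
    (hσE : ∀ s, σ s.1 = Sum.inl (σE s)) (hinstE : ∀ s, inst s.1 = Sum.inl (instE s))
    (σF : {s : SEv // (σ s).isRight} → GF) (instF : {s : SEv // (σ s).isRight} → B)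
    (hσF : ∀ s, σ s.1 = Sum.inr (σF s)) (hinstF : ∀ s, inst s.1 = Sum.inr (instF s))
    (x : Set SEv) (hx : SS.toPreES.Config x)
    (WE : Assrt RA VA A arA) (WF : Assrt RB VB B arB) :
    x ∈ sem (parPre PE.toPreES PF.toPreES).le (Sum.map varE varF) σ inst
        (Sum.map sortA sortB) (Sum.map sortVA sortVB)
        (interpSum interpA interpB) Trm.var
        (Assrt.disj2
          (WE.rename Sum.inl (fun _ => rfl) Sum.inl Sum.inl)
          (WF.rename Sum.inr (fun _ => rfl) Sum.inr Sum.inr)) ↔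
      ({s : {s : SEv // (σ s).isLeft} | s.1 ∈ x} ∈
        sem PE.le varE σE instE sortA sortVA interpA Trm.var WE ∨
       {s : {s : SEv // (σ s).isRight} | s.1 ∈ x} ∈
        sem PF.le varF σF instF sortB sortVB interpB Trm.var WF) := by
  have hE := sem_comp (parPre PE.toPreES PF.toPreES).le (Sum.map varE varF) σ inst
    (Sum.map sortA sortB) (Sum.map sortVA sortVB) (interpSum interpA interpB)
    PE.le varE (fun s => (σ s).isLeft = true) σE instE sortA sortVA interpA
    Sum.inl Sum.inl Sum.inl Sum.inl (fun _ => rfl)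
    (fun _ _ => Iff.rfl) (fun _ => rfl)
    Sum.inl_injective Sum.inl_injective Sum.inl_injective
    (fun g α₀ h => by
      cases g with
      | inl a => exact ⟨a, rfl⟩
      | inr b => simp at h)
    hσE
    (fun s g₀ h => by simp [h])
    hinstE
    (fun s a₀ h => by
      by_cases hps : (σ s).isLeft = true
      · exact hps
      · exfalso
        have hr : (σ s).isRight = true := by
          cases hσs : σ s <;> simp [hσs] at hps ⊢
        have h2 := hinstF ⟨s, hr⟩
        rw [h] at h2
        exact absurd h2 (by simp))
    (fun a₀ α₀ h => by simp [h])
    (fun a α₀ h => by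
      cases a with
      | inl a₀ => exact ⟨a₀, rfl, by simpa using h⟩
      | inr b => simp at h)
    (fun r v => Iff.rfl)
    x WE Trm.var Trm.var (fun β => rfl)
  have hF := sem_comp (parPre PE.toPreES PF.toPreES).le (Sum.map varE varF) σ inst
    (Sum.map sortA sortB) (Sum.map sortVA sortVB) (interpSum interpA interpB)
    PF.le varF (fun s => (σ s).isRight = true) σF instF sortB sortVB interpB
    Sum.inr Sum.inr Sum.inr Sum.inr (fun _ => rfl)
    (fun _ _ => Iff.rfl) (fun _ => rfl)
    Sum.inr_injective Sum.inr_injective Sum.inr_injective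
    (fun g α₀ h => by
      cases g with
      | inl a => simp at h
      | inr b => exact ⟨b, rfl⟩)
    hσF
    (fun s g₀ h => by simp [h])
    hinstF
    (fun s a₀ h => by
      by_cases hps : (σ s).isRight = true
      · exact hps
      · exfalso
        have hr : (σ s).isLeft = true := by
          cases hσs : σ s <;> simp [hσs] at hps ⊢
        have h2 := hinstE ⟨s, hr⟩
        rw [h] at h2
        exact absurd h2 (by simp))
    (fun a₀ α₀ h => by simp [h])
    (fun a α₀ h => by
      cases a with
      | inl a₀ => simp at h
      | inr b => exact ⟨b, rfl, by simpa using h⟩)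
    (fun r v => Iff.rfl)
    x WF Trm.var Trm.var (fun β => rfl)
  simp only [sem, Set.mem_union]
  exact or_congr hE hF
end

section
/- For an event structure with polarity A, the finite configurations of CC_A are exactly the finite configurations x of A⊥||A such that every positive event c ∈ x has its counterpart c̄ ∈ x. -/
section Copycat

variable {G : Type}

/-- The complementary event `c̄` in `A⊥ ‖ A`. -/
def ccBar : G ⊕ G → G ⊕ G := Sum.elim Sum.inr Sum.inl

/-- The polarity on `A⊥ ‖ A`: reversed on the left copy. -/
def dualPol (pol : G → Bool) : G ⊕ G → Bool := Sum.elim (fun a => !pol a) pol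

/-- The causal order of `CC_A`: the (reflexive) transitive closure of the order
of `A⊥ ‖ A` together with all pairs `(c̄, c)` for positive `c`. -/
def ccLe (P : ES G) (pol : G → Bool) : (G ⊕ G) → (G ⊕ G) → Prop :=
  Relation.ReflTransGen (fun c c' =>
    (parPre P.toPreES P.toPreES).le c c' ∨ (dualPol pol c' = true ∧ c = ccBar c'))

/-- The copycat data: consistency of `X` requires the `≤_{CC}`-down-closure of
`X` to be consistent in `A⊥ ‖ A`. -/
def ccPre (P : ES G) (pol : G → Bool) : PreES (G ⊕ G) where
  le := ccLe P pol
  con X := (parPre P.toPreES P.toPreES).con {c | ∃ c' ∈ X, ccLe P pol c c'}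

end Copycat

/-- the finite configurations of `CC_A` are exactly the finite
configurations `x` of `A⊥‖A` such that every positive `c ∈ x` has `c̄ ∈ x`. -/
theorem copycat_configurations {G : Type} (P : ES G) (pol : G → Bool)
    (x : Set (G ⊕ G)) (hfin : x.Finite) :
    (ccPre P pol).Config x ↔
      ((parPre P.toPreES P.toPreES).Config x ∧
        ∀ c ∈ x, dualPol pol c = true → ccBar c ∈ x) := by
  constructor
  · rintro ⟨hcon, hdc⟩
    refine ⟨⟨?_, fun e e' h he => hdc e e' (Relation.ReflTransGen.single (Or.inl h)) he⟩, ?_⟩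
    · intro X hX hXfin
      obtain ⟨h1, h2⟩ := hcon X hX hXfin
      refine ⟨P.con_subset _ _ ?_ h1, P.con_subset _ _ ?_ h2⟩
      · intro a ha
        exact ⟨Sum.inl a, ha, Relation.ReflTransGen.refl⟩
      · intro a ha
        exact ⟨Sum.inr a, ha, Relation.ReflTransGen.refl⟩
    · intro c hc hpol
      exact hdc c (ccBar c) (Relation.ReflTransGen.single (Or.inr ⟨hpol, rfl⟩)) hc
  · rintro ⟨⟨hconQ, hdcQ⟩, hpos⟩
    have hdc : ∀ e e' : G ⊕ G, ccLe P pol e' e → e ∈ x → e' ∈ x := by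
      intro e e' h
      induction h with
      | refl => exact fun he => he
      | tail _ hstep ih =>
        intro he
        rcases hstep with h | ⟨hp, hb⟩
        · exact ih (hdcQ _ _ h he)
        · exact ih (hb ▸ hpos _ he hp)
    refine ⟨?_, hdc⟩
    intro X hX _
    have hsub : {c | ∃ c' ∈ X, ccLe P pol c c'} ⊆ x := by
      rintro c ⟨c', hc', hle⟩
      exact hdc c' c hle (hX hc')
    exact hconQ _ hsub (hfin.subset hsub)
end

section
/- Let σ : S → E with inst be an A,Λ-strategy on an A,Λ-game with access levels. Suppose e, e' ∈ E are Λ-independent (l(e), l(e') incomparable in the preorder Λ), pol(e) = −, pol(e') = +, and x is a configuration of S with both e and e' enabled at σx. Then whenever x is extended by s with σ(s) = e and by s' with σ(s') = e', the set x ∪ {s, s'} is also a configuration of S. -/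
/-- for an `𝓐,Λ`-strategy `σ : S → E`, if `e, e'` are
`Λ`-independent with `pol(e) = −`, `pol(e') = +`, both enabled at `σ x`, then
any extensions of `x` by `s, s'` over `e, e'` can be made jointly:
`x ∪ {s, s'}` is a configuration of `S`. -/
theorem lambda_independent_joint_config {SEv E A V Srt Λ : Type} [Preorder Λ]
    (SS : ES SEv) (G : ES E) (polS : SEv → Bool) (polG : E → Bool)
    (var : E → V) (sortA : A → Srt) (sortV : V → Srt)
    (l : E → Λ)
    -- `E` is an `𝓐,Λ`-game: race-free, no-overlap, with `≲`-monotone levels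
    (hrf : RaceFree G.toPreES polG) (hno : NoOverlap G.toPreES var)
    (hlG : ∀ a a', G.le a' a → l a' ≤ l a)
    (σ : SEv → E) (inst : SEv → A)
    (hstrat : IsAStrategy SS.toPreES G.toPreES polS polG var sortA sortV σ inst)
    -- the `Λ`-strategy condition
    (hlS : ∀ s s', SS.le s' s → l (σ s') ≤ l (σ s))
    (e e' : E)
    (hindep : ¬ l e ≤ l e' ∧ ¬ l e' ≤ l e)
    (hpe : polG e = false) (hpe' : polG e' = true)
    (x : Set SEv) (hx : SS.toPreES.Config x)
    (hen : G.toPreES.Enabled (σ '' x) e) (hen' : G.toPreES.Enabled (σ '' x) e')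
    (s s' : SEv)
    (hs : SS.toPreES.Enabled x s) (hs' : SS.toPreES.Enabled x s')
    (hσs : σ s = e) (hσs' : σ s' = e') :
    SS.toPreES.Config (insert s (insert s' x)) := by
  obtain ⟨hmap, hpol, hsort, hrecept, _⟩ := hstrat
  -- the extended configuration x' = insert s' x
  set x' : Set SEv := insert s' x with hx'def
  have hx' : SS.toPreES.Config x' := hs'.2
  have himg : σ '' x' = insert e' (σ '' x) := by
    rw [hx'def, Set.image_insert_eq, hσs']
  have hne : e ≠ e' := by
    intro h; rw [h, hpe'] at hpe; exact absurd hpe (by simp)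
  -- race-freeness: insert e' (insert e (σ '' x)) is a configuration of G
  have hG : G.toPreES.Config (insert e' (insert e (σ '' x))) :=
    hrf (σ '' x) (hmap.1 x hx) e' e hen' hen hpe' hpe (Ne.symm hne)
  -- e is enabled at σ '' x'
  have henx' : G.toPreES.Enabled (σ '' x') e := by
    refine ⟨?_, ?_⟩
    · rw [himg]
      intro h
      rcases h with h | h
      · exact hne h
      · exact hen.1 h
    · rw [himg, Set.insert_comm]; exact hG
  have hsorte : sortA (inst s) = sortV (var e) := by
    have := hsort s; rwa [hσs] at this
  -- receptivity at x'
  obtain ⟨s'', ⟨hs''en, hσs'', hinst''⟩, huniq⟩ :=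
    hrecept x' hx' e hpe henx' (inst s) hsorte
  -- s'' is enabled at x
  have hs''conf : SS.toPreES.Config (insert s'' x') := hs''en.2
  have hs''notx : s'' ∉ x := fun h => hs''en.1 (Or.inr h)
  have hs''enx : SS.toPreES.Enabled x s'' := by
    refine ⟨hs''notx, ?_, ?_⟩
    · intro X hX hXfin
      exact hs''conf.1 X (hX.trans (Set.insert_subset_insert (Set.subset_insert _ _))) hXfin
    · intro b a hab hb
      have ha : a ∈ insert s'' x' :=
        hs''conf.2 b a hab ((Set.insert_subset_insert (Set.subset_insert _ _)) hb)
      rcases ha with h | h | h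
      · exact Or.inl h
      · -- a = s' : impossible
        exfalso
        subst h
        rcases hb with h | h
        · -- s' ≤ s'' : contradicts Λ-independence
          subst h
          have := hlS b a hab
          rw [hσs', hσs''] at this
          exact hindep.2 this
        · -- s' ≤ b ∈ x : s' ∈ x, contradiction
          exact hs'.1 (hx.2 b a hab h)
      · exact Or.inr h
  -- uniqueness at x forces s'' = s
  obtain ⟨t, _, htuniq⟩ := hrecept x hx e hpe hen (inst s) hsorte
  have hts'' : s'' = t := htuniq s'' ⟨hs''enx, hσs'', hinst''⟩
  have hts : s = t := htuniq s ⟨hs, hσs, rfl⟩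
  have : s'' = s := hts''.trans hts.symm
  rw [← this]
  exact hs''conf
end

section
/- Let σ : S → E be a strategy (total, receptive, innocent map of event structures with polarity). For any configuration x of S and any configuration y of E with σx ⊆ y such that y \ σx contains only negative events, there is a unique configuration x' ⊇ x of S with σx' = y. -/
namespace PreES

variable {E : Type} {P : PreES E} {w y z : Set E} {e : E}

theorem Config.inter (hy : P.Config y) (hz : P.Config z) : P.Config (y ∩ z) :=
  ⟨fun X hX hXf => hy.1 X (hX.trans Set.inter_subset_left) hXf,
    fun e e' hle he => ⟨hy.2 e e' hle he.1, hz.2 e e' hle he.2⟩⟩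

theorem config_sUnion_of_isChain {c : Set (Set E)} (hc : IsChain (· ⊆ ·) c) (hne : c.Nonempty)
    (hconf : ∀ x ∈ c, P.Config x) : P.Config (⋃₀ c) := by
  refine ⟨fun X hX hXf => ?_, fun e e' hle he => ?_⟩
  · obtain ⟨x, hxc, hXx⟩ := hc.directedOn.exists_mem_subset_of_finite_of_subset_sUnion hne hXf hX
    exact (hconf x hxc).1 X hXx hXf
  · obtain ⟨x, hxc, hex⟩ := Set.mem_sUnion.mp he
    exact Set.mem_sUnion_of_mem ((hconf x hxc).2 e e' hle hex) hxc

theorem Config.insert_of_causes_mem (hy : P.Config y) (hw : P.Config w) (hwy : w ⊆ y)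
    (he : e ∈ y) (hcauses : ∀ e', P.le e' e → e' ≠ e → e' ∈ w) : P.Config (insert e w) := by
  refine ⟨fun X hX hXf => hy.1 X (hX.trans (Set.insert_subset he hwy)) hXf, ?_⟩
  rintro a b hba (rfl | ha)
  · by_cases hb : b = a
    · exact Or.inl hb
    · exact Or.inr (hcauses b hba hb)
  · exact Or.inr (hw.2 a b hba ha)

theorem Config.enabled_of_minimal (hy : P.Config y) (hw : P.Config w) (hwy : w ⊆ y)
    (he : e ∈ y \ w) (hmin : ∀ e' ∈ y \ w, P.le e' e → e' = e) : P.Enabled w e :=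
  ⟨he.2, hy.insert_of_causes_mem hw hwy he.1 fun e' hle hne =>
    by_contra fun h => hne (hmin e' ⟨hy.2 e e' hle he.1, h⟩ hle)⟩

end PreES

namespace ES

variable {E : Type} (G : ES E)

/-- The down-closure `[e]`. `G.le` is not an order instance; comparing down-closures in `Set E`
gives access to Mathlib's lemmas on maximal and minimal elements. -/
def causes (e : E) : Set E := {e' | G.le e' e}

theorem causes_subset_causes_iff {a b : E} : G.causes a ⊆ G.causes b ↔ G.le a b :=
  ⟨fun h => h (G.le_refl a), fun h _ hc => G.le_trans _ _ _ hc h⟩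

theorem exists_minimal {A : Set E} (hA : A.Nonempty) :
    ∃ e ∈ A, ∀ e' ∈ A, G.le e' e → e' = e := by
  obtain ⟨a, ha⟩ := hA
  obtain ⟨m, ⟨hmA, hma⟩, hmin⟩ := Set.Finite.exists_minimalFor G.causes {e ∈ A | G.le e a}
    ((G.causes_finite a).subset fun _ h => h.2) ⟨a, ha, G.le_refl a⟩
  refine ⟨m, hmA, fun e' he' hle => G.le_antisymm _ _ hle ?_⟩
  exact G.causes_subset_causes_iff.1
    (hmin ⟨he', G.le_trans _ _ _ hle hma⟩ (G.causes_subset_causes_iff.2 hle))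

theorem exists_imm_of_le {a b : E} (hle : G.le a b) (hne : a ≠ b) :
    ∃ t, G.le a t ∧ G.Imm t b := by
  obtain ⟨m, ⟨ham, hmb, hmne⟩, hmax⟩ :=
    Set.Finite.exists_maximalFor G.causes {d | G.le a d ∧ G.le d b ∧ d ≠ b}
      ((G.causes_finite b).subset fun _ h => h.2.1) ⟨a, G.le_refl a, hle, hne⟩
  refine ⟨m, ham, hmne, hmb, fun d hmd hdb => ?_⟩
  by_cases hd : d = b
  · exact Or.inr hd
  · refine Or.inl (G.le_antisymm _ _ (G.causes_subset_causes_iff.1 ?_) hmd)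
    exact hmax ⟨G.le_trans _ _ _ ham hmd, hdb, hd⟩ (G.causes_subset_causes_iff.2 hmd)

theorem config_insert_of_imm_mem {w x : Set E} {s : E} (hx : G.Config x) (hw : G.Config w)
    (hwx : w ⊆ x) (hs : s ∈ x) (himm : ∀ u, G.Imm u s → u ∈ w) : G.Config (insert s w) :=
  hx.insert_of_causes_mem hw hwx hs fun e' hle hne => by
    obtain ⟨t, het, hts⟩ := G.exists_imm_of_le hle hne
    exact hw.2 t e' het (himm t hts)

end ES

namespace IsStrategy

variable {SEv E : Type} {S : ES SEv} {polS : SEv → Bool} {polG : E → Bool} {σ : SEv → E}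

theorem enabled_of_image_enabled {G : PreES E} (hσ : IsStrategy S.toPreES G polS polG σ)
    {z x : Set SEv} {s : SEv} (hz : S.Config z) (hx : S.Config x) (hzx : z ⊆ x) (hs : s ∈ x)
    (hsz : s ∉ z) (hneg : polS s = false) (hen : G.Enabled (σ '' z) (σ s)) :
    S.Enabled z s := by
  have ⟨⟨_, hinj⟩, _, _, hinn⟩ := hσ
  refine ⟨hsz, S.config_insert_of_imm_mem hx hz hzx hs fun u hu => ?_⟩
  have hσu : G.Imm (σ u) (σ s) := hinn u s hu (Or.inl hneg)
  obtain ⟨t, htz, htu⟩ : σ u ∈ σ '' z :=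
    (hen.2.2 _ _ hσu.2.1 (Set.mem_insert _ _)).resolve_left hσu.1
  rwa [← hinj x hx t (hzx htz) u (hx.2 s u hu.2.1 hs) htu]

theorem subset_of_image_eq {G : PreES E} (hσ : IsStrategy S.toPreES G polS polG σ)
    {x x₁ x₂ : Set SEv} {y : Set E} (hneg : ∀ e ∈ y \ σ '' x, polG e = false)
    (hx₁ : x ⊆ x₁) (hc₁ : S.Config x₁) (hi₁ : σ '' x₁ = y)
    (hx₂ : x ⊆ x₂) (hc₂ : S.Config x₂) (hi₂ : σ '' x₂ = y) : x₁ ⊆ x₂ := by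
  have ⟨⟨hmap, hinj⟩, hpol, hrec, _⟩ := hσ
  set z := x₁ ∩ x₂
  have hz : S.Config z := hc₁.inter hc₂
  by_contra hne
  obtain ⟨s, hs, hmin⟩ := S.exists_minimal (Set.nonempty_of_not_subset hne)
  rw [← Set.sdiff_self_inter] at hs hmin
  have hsen : S.Enabled z s := hc₁.enabled_of_minimal hz Set.inter_subset_left hs hmin
  have hσs : σ s ∉ σ '' z := fun ⟨t, htz, hts⟩ => hs.2 (hinj x₁ hc₁ t htz.1 s hs.1 hts ▸ htz)
  have hσsy : σ s ∈ y := hi₁ ▸ Set.mem_image_of_mem σ hs.1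
  have hσneg : polG (σ s) = false :=
    hneg _ ⟨hσsy, fun h => hσs (Set.image_mono (Set.subset_inter hx₁ hx₂) h)⟩
  have hσen : G.Enabled (σ '' z) (σ s) := ⟨hσs, Set.image_insert_eq ▸ hmap _ hsen.2⟩
  obtain ⟨s₂, hs₂, hs₂s⟩ : σ s ∈ σ '' x₂ := hi₂ ▸ hσsy
  have hs₂en : S.Enabled z s₂ :=
    hσ.enabled_of_image_enabled hz hc₂ Set.inter_subset_right hs₂ (fun h => hσs ⟨s₂, h, hs₂s⟩)
      (by rw [← hpol s₂, hs₂s, hσneg]) (hs₂s ▸ hσen)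
  obtain ⟨_, -, huniq⟩ := hrec z hz (σ s) hσneg hσen
  exact hs.2 ⟨hs.1, (huniq s ⟨hsen, rfl⟩).trans (huniq s₂ ⟨hs₂en, hs₂s⟩).symm ▸ hs₂⟩

theorem exists_config_image_eq {G : ES E} (hσ : IsStrategy S.toPreES G.toPreES polS polG σ)
    {x : Set SEv} {y : Set E} (hx : S.Config x) (hy : G.Config y) (hsub : σ '' x ⊆ y)
    (hneg : ∀ e ∈ y \ σ '' x, polG e = false) :
    ∃ x', x ⊆ x' ∧ S.Config x' ∧ σ '' x' = y := by
  have ⟨⟨hmap, _⟩, _, hrec, _⟩ := hσ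
  set C := {x' | x ⊆ x' ∧ S.Config x' ∧ σ '' x' ⊆ y}
  have hchain : ∀ c ⊆ C, IsChain (· ⊆ ·) c → c.Nonempty → ∃ ub ∈ C, ∀ x' ∈ c, x' ⊆ ub :=
    fun c hcC hc hne => ⟨⋃₀ c,
      ⟨hne.elim fun x' h => (hcC h).1.trans (Set.subset_sUnion_of_mem h),
        PreES.config_sUnion_of_isChain hc hne fun x' h => (hcC h).2.1,
        Set.image_sUnion ▸ Set.sUnion_subset (by rintro _ ⟨x', h, rfl⟩; exact (hcC h).2.2)⟩,
      fun _ => Set.subset_sUnion_of_mem⟩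
  obtain ⟨m, hxm, ⟨-, hm, hmy⟩, hmax⟩ := zorn_subset_nonempty C hchain x ⟨subset_rfl, hx, hsub⟩
  refine ⟨m, hxm, hm, hmy.antisymm (Set.sdiff_eq_empty.1 ?_)⟩
  by_contra hne
  obtain ⟨e, he, hmin⟩ := G.exists_minimal (Set.nonempty_iff_ne_empty.2 hne)
  have hen : G.Enabled (σ '' m) e := hy.enabled_of_minimal (hmap m hm) hmy he hmin
  obtain ⟨s, ⟨hs, rfl⟩, -⟩ :=
    hrec m hm e (hneg e ⟨he.1, fun h => he.2 (Set.image_mono hxm h)⟩) hen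
  have hsm : insert s m ⊆ m := hmax ⟨hxm.trans (Set.subset_insert _ _), hs.2,
    Set.image_insert_eq ▸ Set.insert_subset he.1 hmy⟩ (Set.subset_insert _ _)
  exact hs.1 (hsm (Set.mem_insert _ _))

end IsStrategy

/-- for a strategy `σ : S → E`, a configuration `x` of `S` and a
configuration `y` of `E` with `σ x ⊆⁻ y` (only negative events added), there is
a unique configuration `x' ⊇ x` with `σ x' = y`. -/
theorem strategy_neg_extension {SEv E : Type}
    (SS : ES SEv) (G : ES E) (polS : SEv → Bool) (polG : E → Bool)
    (σ : SEv → E)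
    (hstrat : IsStrategy SS.toPreES G.toPreES polS polG σ)
    (x : Set SEv) (hx : SS.toPreES.Config x)
    (y : Set E) (hy : G.toPreES.Config y)
    (hsub : σ '' x ⊆ y)
    (hneg : ∀ e ∈ y \ (σ '' x), polG e = false) :
    ∃! x' : Set SEv, x ⊆ x' ∧ SS.toPreES.Config x' ∧ σ '' x' = y := by
  obtain ⟨x', hxx', hx', hx'y⟩ := hstrat.exists_config_image_eq hx hy hsub hneg
  refine ⟨x', ⟨hxx', hx', hx'y⟩, fun x'' ⟨hxx'', hx'', hx''y⟩ => ?_⟩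
  exact (hstrat.subset_of_image_eq hneg hxx'' hx'' hx''y hxx' hx' hx'y).antisymm
    (hstrat.subset_of_image_eq hneg hxx' hx' hx'y hxx'' hx'' hx''y)
end

section
/- Let σ : S → E be a strategy and x a configuration of S. For any configuration y of E with y ⊆ σx such that all events of σx \ y are positive, there is a unique configuration x' ⊆ x of S with σx' = y. -/
/-! Let `x'` be the set of events of `x` whose image lies in `y`; it is the only candidate, since
`σ` is injective on `x`, and its image is `y` because `y ⊆ σ x`. It remains to see that `x'` is
down-closed. If some `s ∈ x'` had a cause outside `x'`, then below `s` there would be an immediate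
dependency `s₁ → s₂` with `σ s₁ ∉ y` and `σ s₂ ∈ y`. As `σ s₁ ∈ σ x \ y`, the event `s₁` is
positive, so innocence makes `σ s₁ → σ s₂` a dependency of the game, and `σ s₁ ∈ y` because `y`
is down-closed: a contradiction. -/

namespace ES

variable {α : Type} (S : ES α)

abbrev toPartialOrder : PartialOrder α where
  le := S.le
  le_refl := S.le_refl
  le_trans := S.le_trans
  le_antisymm := S.le_antisymm

theorem exists_imm_of_le_of_ne {a b : α} (hab : S.le a b) (hne : a ≠ b) :
    ∃ c, S.toPreES.Imm a c ∧ S.le c b := by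
  let _ := S.toPartialOrder
  let above : Set α := {c | a ≤ c ∧ c ≤ b ∧ c ≠ a}
  have hfin : above.Finite := (S.causes_finite b).subset fun c hc => hc.2.1
  obtain ⟨c, hc⟩ := hfin.exists_minimal ⟨b, hab, le_rfl, hne.symm⟩
  refine ⟨c, ⟨hc.prop.2.2.symm, hc.prop.1, fun d had hdc => ?_⟩, hc.prop.2.1⟩
  by_cases hda : d = a
  · exact Or.inl hda
  · exact Or.inr (hc.eq_of_le ⟨had, S.le_trans _ _ _ hdc hc.prop.2.1, hda⟩ hdc)

theorem exists_imm_of_not_of_le {p : α → Prop} {a b : α} (hab : S.le a b) (ha : ¬p a)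
    (hb : p b) :
    ∃ c d, S.toPreES.Imm c d ∧ S.le d b ∧ ¬p c ∧ p d := by
  let _ := S.toPartialOrder
  let failing : Set α := {c | c ≤ b ∧ ¬p c}
  have hfin : failing.Finite := (S.causes_finite b).subset fun c hc => hc.1
  obtain ⟨c, hc⟩ := hfin.exists_maximal ⟨a, hab, ha⟩
  have hcb : c ≠ b := fun h => hc.prop.2 (h ▸ hb)
  obtain ⟨d, hcd, hdb⟩ := S.exists_imm_of_le_of_ne hc.prop.1 hcb
  refine ⟨c, d, hcd, hdb, hc.prop.2, ?_⟩
  by_contra hd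
  exact hcd.1 (hc.eq_of_le ⟨hdb, hd⟩ hcd.2.1)

end ES

theorem PreES.Config.of_subset {α : Type} {P : PreES α} {x x' : Set α} (hx : P.Config x)
    (hsub : x' ⊆ x) (hdown : ∀ e e', P.le e' e → e ∈ x' → e' ∈ x') : P.Config x' :=
  ⟨fun X hX hfin => hx.1 X (hX.trans hsub) hfin, hdown⟩

theorem IsStrategy.injOn {SEv E : Type} {S : PreES SEv} {G : PreES E} {polS : SEv → Bool}
    {polG : E → Bool} {σ : SEv → E} (hσ : IsStrategy S G polS polG σ) {x : Set SEv}
    (hx : S.Config x) : Set.InjOn σ x :=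
  fun _ h₁ _ h₂ h => hσ.1.2 x hx _ h₁ _ h₂ h

theorem IsStrategy.config_inter_preimage {SEv E : Type} {S : ES SEv} {G : ES E}
    {polS : SEv → Bool} {polG : E → Bool} {σ : SEv → E}
    (hσ : IsStrategy S.toPreES G.toPreES polS polG σ) {x : Set SEv} (hx : S.toPreES.Config x)
    {y : Set E} (hy : G.toPreES.Config y) (hpos : ∀ e ∈ (σ '' x) \ y, polG e = true) :
    S.toPreES.Config (x ∩ σ ⁻¹' y) := by
  obtain ⟨-, hpol, -, hinn⟩ := hσ
  refine hx.of_subset Set.inter_subset_left fun s s' hle ⟨hs, hsy⟩ => ⟨hx.2 s s' hle hs, ?_⟩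
  by_contra hs'y
  obtain ⟨s₁, s₂, himm, hs₂s, hs₁y, hs₂y⟩ :=
    S.exists_imm_of_not_of_le (p := (σ · ∈ y)) hle hs'y hsy
  have hs₁x : s₁ ∈ x := hx.2 s s₁ (S.le_trans _ _ _ himm.2.1 hs₂s) hs
  have hs₁pos : polS s₁ = true := hpol s₁ ▸ hpos (σ s₁) ⟨⟨s₁, hs₁x, rfl⟩, hs₁y⟩
  exact hs₁y (hy.2 _ _ (hinn s₁ s₂ himm (Or.inr hs₁pos)).2.1 hs₂y)

/-- for a strategy `σ : S → E`, a configuration `x` of `S` and a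
configuration `y` of `E` with `y ⊆⁺ σ x` (only positive events removed), there
is a unique configuration `x' ⊆ x` with `σ x' = y`. -/
theorem strategy_pos_restriction {SEv E : Type}
    (SS : ES SEv) (G : ES E) (polS : SEv → Bool) (polG : E → Bool)
    (σ : SEv → E)
    (hstrat : IsStrategy SS.toPreES G.toPreES polS polG σ)
    (x : Set SEv) (hx : SS.toPreES.Config x)
    (y : Set E) (hy : G.toPreES.Config y)
    (hsub : y ⊆ σ '' x)
    (hpos : ∀ e ∈ (σ '' x) \ y, polG e = true) :
    ∃! x' : Set SEv, x' ⊆ x ∧ SS.toPreES.Config x' ∧ σ '' x' = y := by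
  refine ⟨x ∩ σ ⁻¹' y, ⟨Set.inter_subset_left, hstrat.config_inter_preimage hx hy hpos, ?_⟩, ?_⟩
  · rw [Set.image_inter_preimage, Set.inter_eq_right.mpr hsub]
  · rintro x' ⟨hx'x, -, rfl⟩
    rw [Set.inter_comm, (hstrat.injOn hx).preimage_image_inter hx'x]
end
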